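/- (Algebraic core of: the type IIB♯ MCK Lefschetz pencil of odd genus has spin total space.) Let g be odd, g ≥ 3. In V, define the vectors: B_{0,1} = α_1+⋯+α_g+δ_5+δ_8; B_{1,1} = α_1+⋯+α_g+β_1+β_g+δ_5+δ_8; B_{2i,1} = α_{i+1}+⋯+α_{g−i}+β_i+β_{g+1−i}+δ_5+δ_8 for 1 ≤ i ≤ (g−1)/2; B_{2i+1,1} = α_{i+1}+⋯+α_{g−i}+β_{i+1}+β_{g−i}+δ_5+δ_8 for 1 ≤ i ≤ (g−3)/2; B_{g,1} = α_{(g+1)/2}+δ_2+δ_4+δ_5+δ_6; a_1 = β_{(g+1)/2}+δ_5; a_2 = β_{(g+1)/2}+δ_7; b_1 = β_{(g+1)/2}+δ_2+δ_4+δ_6; b_2 = β_{(g+1)/2}+δ_2+δ_4+δ_8; B_{k,2} = B_{k,1}+δ_3+δ_4 for 0 ≤ k ≤ g; a_3 = β_{(g+1)/2}+δ_3; a_4 = β_{(g+1)/2}+δ_3+δ_5+δ_7; b_3 = β_{(g+1)/2}+δ_2; b_4 = β_{(g+1)/2}+δ_2+δ_6+δ_8. Then there exists a quadratic form q with respect to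 B such that q takes the value 1 on each of the vectors B_{k,j} (0 ≤ k ≤ g, j ∈ {1,2}), a_1, a_2, a_3, a_4, b_1, b_2, b_3, b_4, and q(δ_j) = 1 for all j ∈ {1, …, 8}. -/
import Mathlib


/-- The mod-2 first homology of the compact genus-`g` surface with 8 boundary
components: freely spanned by `α_1, …, α_g, β_1, …, β_g, δ_1, …, δ_7`. -/
abbrev MCKVec (g : ℕ) := (Fin g ⊕ Fin g ⊕ Fin 7) → ZMod 2

/-- The basis vector `α_i` (for `1 ≤ i ≤ g`). -/
def alph (g i : ℕ) : MCKVec g := fun x =>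
  match x with
  | Sum.inl j => if (j : ℕ) + 1 = i then 1 else 0
  | _ => 0

/-- The basis vector `β_i` (for `1 ≤ i ≤ g`). -/
def bet (g i : ℕ) : MCKVec g := fun x =>
  match x with
  | Sum.inr (Sum.inl j) => if (j : ℕ) + 1 = i then 1 else 0
  | _ => 0

/-- The basis vector `δ_j` (for `1 ≤ j ≤ 7`). -/
def dlt' (g j : ℕ) : MCKVec g := fun x =>
  match x with
  | Sum.inr (Sum.inr k) => if (k : ℕ) + 1 = j then 1 else 0
  | _ => 0

/-- The boundary classes `δ_1, …, δ_7`, with `δ_8 := δ_1 + δ_2 + ⋯ + δ_7`. -/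
def dlt (g j : ℕ) : MCKVec g :=
  if j = 8 then
    dlt' g 1 + dlt' g 2 + dlt' g 3 + dlt' g 4 + dlt' g 5 + dlt' g 6 + dlt' g 7
  else dlt' g j

/-- The mod-2 intersection pairing: the symmetric bilinear form determined by
`B(α_i, β_i) = 1` for each `i` and `B = 0` on every other pair of basis vectors. -/
def Bform (g : ℕ) (x y : MCKVec g) : ZMod 2 :=
  ∑ j : Fin g,
    (x (Sum.inl j) * y (Sum.inr (Sum.inl j)) + x (Sum.inr (Sum.inl j)) * y (Sum.inl j))

/-- The homology classes of the vanishing cycles  (first half of the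
monodromy factorization), as computed in the paper. -/
def BIIBsharp (g k : ℕ) : MCKVec g :=
  if k = 0 then (∑ m ∈ Finset.Icc 1 g, alph g m) + dlt g 5 + dlt g 8
  else if k = 1 then (∑ m ∈ Finset.Icc 1 g, alph g m) + bet g 1 + bet g g + dlt g 5 + dlt g 8
  else if k = g then alph g ((g + 1) / 2) + dlt g 2 + dlt g 4 + dlt g 5 + dlt g 6
  else if k % 2 = 0 then
    (∑ m ∈ Finset.Icc (k / 2 + 1) (g - k / 2), alph g m)
      + bet g (k / 2) + bet g (g + 1 - k / 2) + dlt g 5 + dlt g 8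
  else
    (∑ m ∈ Finset.Icc ((k - 1) / 2 + 1) (g - (k - 1) / 2), alph g m)
      + bet g ((k - 1) / 2 + 1) + bet g (g - (k - 1) / 2) + dlt g 5 + dlt g 8

namespace SpinAux

/-- The candidate quadratic form. -/
def qf (g : ℕ) (x : MCKVec g) : ZMod 2 :=
  (∑ j : Fin g, (x (Sum.inl j) + x (Sum.inl j) * x (Sum.inr (Sum.inl j)))) +
    ∑ k : Fin 7, x (Sum.inr (Sum.inr k))

lemma qf_add (g : ℕ) (x y : MCKVec g) :
    qf g (x + y) = qf g x + qf g y + Bform g x y := by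
  simp only [qf, Bform, Pi.add_apply]
  have h : ∀ j : Fin g,
      (x (Sum.inl j) + y (Sum.inl j)) +
        (x (Sum.inl j) + y (Sum.inl j)) * (x (Sum.inr (Sum.inl j)) + y (Sum.inr (Sum.inl j)))
      = ((x (Sum.inl j) + x (Sum.inl j) * x (Sum.inr (Sum.inl j)))
          + (y (Sum.inl j) + y (Sum.inl j) * y (Sum.inr (Sum.inl j))))
        + (x (Sum.inl j) * y (Sum.inr (Sum.inl j)) + x (Sum.inr (Sum.inl j)) * y (Sum.inl j)) := by
    intro j; ring
  rw [Finset.sum_congr rfl (fun j _ => h j)]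
  simp only [Finset.sum_add_distrib]
  ring

lemma B_add_left (g : ℕ) (x y z : MCKVec g) :
    Bform g (x + y) z = Bform g x z + Bform g y z := by
  simp only [Bform, Pi.add_apply]
  rw [← Finset.sum_add_distrib]
  exact Finset.sum_congr rfl fun j _ => by ring

lemma B_dlt'_right (g : ℕ) (x : MCKVec g) (j : ℕ) : Bform g x (dlt' g j) = 0 := by
  simp [Bform, dlt']

lemma B_dlt_right (g : ℕ) (x : MCKVec g) (j : ℕ) : Bform g x (dlt g j) = 0 := by
  unfold dlt
  split
  · simp [Bform, dlt', Pi.add_apply]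
  · exact B_dlt'_right g x j

lemma B_bet_bet (g i i' : ℕ) : Bform g (bet g i) (bet g i') = 0 := by
  simp [Bform, bet]

end SpinAux

namespace SpinAux

lemma qf_bet (g i : ℕ) : qf g (bet g i) = 0 := by
  simp [qf, bet]

lemma qf_dlt' (g j : ℕ) (h1 : 1 ≤ j) (h2 : j ≤ 7) : qf g (dlt' g j) = 1 := by
  simp only [qf, dlt']
  rw [Finset.sum_eq_zero (fun j _ => by simp)]
  rw [Fin.sum_univ_seven]
  interval_cases j <;> decide

lemma qf_dlt (g j : ℕ) (h1 : 1 ≤ j) (h2 : j ≤ 8) : qf g (dlt g j) = 1 := by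
  unfold dlt
  split
  · simp only [qf, dlt', Pi.add_apply]
    rw [Finset.sum_eq_zero (fun j _ => by simp)]
    rw [Fin.sum_univ_seven]
    decide
  · exact qf_dlt' g j h1 (by omega)

lemma qf_alph (g a : ℕ) (ha1 : 1 ≤ a) (ha2 : a ≤ g) : qf g (alph g a) = 1 := by
  simp only [qf, alph]
  rw [Finset.sum_eq_single (⟨a - 1, by omega⟩ : Fin g)]
  · have : (a:ℕ) - 1 + 1 = a := by omega
    simp [this]
  · intro j _ hj
    have : ¬ ((j:ℕ) + 1 = a) := by
      intro hc
      apply hj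
      apply Fin.ext
      simp; omega
    simp [this]
  · simp

lemma qf_sum_alph (g : ℕ) (s : Finset ℕ) (hs : ∀ m ∈ s, 1 ≤ m ∧ m ≤ g) :
    qf g (∑ m ∈ s, alph g m) = (s.card : ZMod 2) := by
  induction s using Finset.cons_induction with
  | empty => simp [qf]
  | cons a s ha ih =>
    rw [Finset.sum_cons, qf_add]
    rw [ih (fun m hm => hs m (Finset.mem_cons_of_mem hm))]
    have hB : Bform g (alph g a) (∑ m ∈ s, alph g m) = 0 := by
      apply Finset.sum_eq_zero
      intro j _
      simp [alph, Finset.sum_apply]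
    have hq : qf g (alph g a) = 1 :=
      qf_alph g a (hs a (Finset.mem_cons_self a s)).1 (hs a (Finset.mem_cons_self a s)).2
    rw [hB, hq, Finset.card_cons]
    push_cast
    ring

end SpinAux

namespace SpinAux

lemma sum_alph_beta_coord (g : ℕ) (s : Finset ℕ) (j : Fin g) :
    (∑ m ∈ s, alph g m) (Sum.inr (Sum.inl j)) = 0 := by
  simp [alph, Finset.sum_apply]

lemma sum_alph_alpha_coord (g : ℕ) (s : Finset ℕ) (j : Fin g) :
    (∑ m ∈ s, alph g m) (Sum.inl j) = if (j : ℕ) + 1 ∈ s then 1 else 0 := by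
  rw [Finset.sum_apply]
  simp only [alph]
  exact Finset.sum_ite_eq s ((j : ℕ) + 1) (fun _ => 1)

lemma B_alphsum_bet_mem (g : ℕ) (s : Finset ℕ) (i : ℕ) (h0 : i ∈ s) (h1 : 1 ≤ i) (h2 : i ≤ g) :
    Bform g (∑ m ∈ s, alph g m) (bet g i) = 1 := by
  simp only [Bform, sum_alph_beta_coord, sum_alph_alpha_coord, bet, zero_mul, mul_zero, add_zero]
  rw [Finset.sum_eq_single (⟨i - 1, by omega⟩ : Fin g)]
  · have : (i:ℕ) - 1 + 1 = i := by omega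
    simp [this, h0]
  · intro j _ hj
    have : ¬ ((j:ℕ) + 1 = i) := fun hc => hj (Fin.ext (by simp; omega))
    simp [this]
  · simp

lemma B_alphsum_bet_not_mem (g : ℕ) (s : Finset ℕ) (i : ℕ) (h0 : i ∉ s) :
    Bform g (∑ m ∈ s, alph g m) (bet g i) = 0 := by
  simp only [Bform, sum_alph_beta_coord, sum_alph_alpha_coord, bet, zero_mul, mul_zero, add_zero]
  apply Finset.sum_eq_zero
  intro j _
  by_cases hji : (j:ℕ) + 1 = i
  · rw [hji]; simp [h0]
  · simp [hji]

lemma odd_cast (n : ℕ) (h : n % 2 = 1) : (n : ZMod 2) = 1 := by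
  rw [← ZMod.natCast_mod, h]
  rfl

end SpinAux


open SpinAux

/-- There is a quadratic form `q` with respect to the mod-2 intersection
pairing taking the value `1` on all the vanishing cycles
(`B_{k,·}`, their partners `B_{k,·} + δ_3 + δ_4`, and
`a_1, a_2, a_3, a_4, b_1, b_2, b_3, b_4`), and with `q(δ_j) = 1` for all
`j ∈ {1, …, 8}`. -/
theorem typeIIBsharp_odd_genus_spin (g : ℕ) (hg : 3 ≤ g) (hgodd : Odd g) :
    ∃ q : MCKVec g → ZMod 2,
      (∀ x y : MCKVec g, q (x + y) = q x + q y + Bform g x y) ∧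
      (∀ k ≤ g, q (BIIBsharp g k) = 1) ∧
      (∀ k ≤ g, q (BIIBsharp g k + dlt g 3 + dlt g 4) = 1) ∧
      q (bet g ((g + 1) / 2) + dlt g 5) = 1 ∧
      q (bet g ((g + 1) / 2) + dlt g 7) = 1 ∧
      q (bet g ((g + 1) / 2) + dlt g 3) = 1 ∧
      q (bet g ((g + 1) / 2) + dlt g 3 + dlt g 5 + dlt g 7) = 1 ∧
      q (bet g ((g + 1) / 2) + dlt g 2 + dlt g 4 + dlt g 6) = 1 ∧
      q (bet g ((g + 1) / 2) + dlt g 2 + dlt g 4 + dlt g 8) = 1 ∧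
      q (bet g ((g + 1) / 2) + dlt g 2) = 1 ∧
      q (bet g ((g + 1) / 2) + dlt g 2 + dlt g 6 + dlt g 8) = 1 ∧
      (∀ j, 1 ≤ j → j ≤ 8 → q (dlt g j) = 1) := by
  have hg2 : g % 2 = 1 := Nat.odd_iff.mp hgodd
  have hmain : ∀ k ≤ g, qf g (BIIBsharp g k) = 1 := by
    intro k hk
    unfold BIIBsharp
    by_cases hk0 : k = 0
    · rw [if_pos hk0, qf_add, qf_add, B_dlt_right, B_dlt_right,
        qf_dlt g 5 (by norm_num) (by norm_num), qf_dlt g 8 (by norm_num) (by norm_num),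
        qf_sum_alph g _ (fun m hm => by simp only [Finset.mem_Icc] at hm; omega),
        Nat.card_Icc, odd_cast (g + 1 - 1) (by omega)]
      decide
    rw [if_neg hk0]
    by_cases hk1 : k = 1
    · rw [if_pos hk1, qf_add, qf_add, qf_add, qf_add, B_dlt_right, B_dlt_right,
        B_add_left, B_bet_bet,
        B_alphsum_bet_mem g _ 1 (by simp only [Finset.mem_Icc]; omega) le_rfl (by omega),
        B_alphsum_bet_mem g _ g (by simp only [Finset.mem_Icc]; omega) (by omega) le_rfl,
        qf_bet, qf_bet,
        qf_dlt g 5 (by norm_num) (by norm_num), qf_dlt g 8 (by norm_num) (by norm_num),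
        qf_sum_alph g _ (fun m hm => by simp only [Finset.mem_Icc] at hm; omega),
        Nat.card_Icc, odd_cast (g + 1 - 1) (by omega)]
      decide
    rw [if_neg hk1]
    by_cases hkg : k = g
    · rw [if_pos hkg, qf_add, qf_add, qf_add, qf_add,
        B_dlt_right, B_dlt_right, B_dlt_right, B_dlt_right,
        qf_alph g ((g + 1) / 2) (by omega) (by omega),
        qf_dlt g 2 (by norm_num) (by norm_num), qf_dlt g 4 (by norm_num) (by norm_num),
        qf_dlt g 5 (by norm_num) (by norm_num), qf_dlt g 6 (by norm_num) (by norm_num)]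
      decide
    rw [if_neg hkg]
    by_cases hke : k % 2 = 0
    · rw [if_pos hke, qf_add, qf_add, qf_add, qf_add, B_dlt_right, B_dlt_right,
        B_add_left, B_bet_bet,
        B_alphsum_bet_not_mem g _ (k / 2) (by simp only [Finset.mem_Icc]; omega),
        B_alphsum_bet_not_mem g _ (g + 1 - k / 2) (by simp only [Finset.mem_Icc]; omega),
        qf_bet, qf_bet,
        qf_dlt g 5 (by norm_num) (by norm_num), qf_dlt g 8 (by norm_num) (by norm_num),
        qf_sum_alph g _ (fun m hm => by simp only [Finset.mem_Icc] at hm; omega),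
        Nat.card_Icc, odd_cast (g - k / 2 + 1 - (k / 2 + 1)) (by omega)]
      decide
    · rw [if_neg hke, qf_add, qf_add, qf_add, qf_add, B_dlt_right, B_dlt_right,
        B_add_left, B_bet_bet,
        B_alphsum_bet_mem g _ ((k - 1) / 2 + 1) (by simp only [Finset.mem_Icc]; omega)
          (by omega) (by omega),
        B_alphsum_bet_mem g _ (g - (k - 1) / 2) (by simp only [Finset.mem_Icc]; omega)
          (by omega) (by omega),
        qf_bet, qf_bet,
        qf_dlt g 5 (by norm_num) (by norm_num), qf_dlt g 8 (by norm_num) (by norm_num),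
        qf_sum_alph g _ (fun m hm => by simp only [Finset.mem_Icc] at hm; omega),
        Nat.card_Icc, odd_cast (g - (k - 1) / 2 + 1 - ((k - 1) / 2 + 1)) (by omega)]
      decide
  refine ⟨qf g, qf_add g, hmain, ?_, ?_, ?_, ?_, ?_, ?_, ?_, ?_, ?_, ?_⟩
  · intro k hk
    rw [qf_add, qf_add, B_dlt_right, B_dlt_right, hmain k hk,
      qf_dlt g 3 (by norm_num) (by norm_num), qf_dlt g 4 (by norm_num) (by norm_num)]
    decide
  all_goals try (intro j hj1 hj2; exact qf_dlt g j hj1 hj2)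
  all_goals
    simp only [qf_add, B_dlt_right, qf_bet,
      qf_dlt g 2 (by norm_num) (by norm_num), qf_dlt g 3 (by norm_num) (by norm_num),
      qf_dlt g 4 (by norm_num) (by norm_num), qf_dlt g 5 (by norm_num) (by norm_num),
      qf_dlt g 6 (by norm_num) (by norm_num), qf_dlt g 7 (by norm_num) (by norm_num),
      qf_dlt g 8 (by norm_num) (by norm_num)]
  all_goals decide
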